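/- For discrete random vectors C^t = (C^t_1,…,C^t_H) and C^p, and any family of proposal conditional distributions q_j(c|y) for each coordinate j, the mutual information is lower bounded as I(C^t; C^p) ≥ ∑_j H(C^t_j) − TC(C^t : C^p) + ∑_j E_{p(c^t_j, c^p)}[log q_j(c^t_j | c^p)]. -/

import Mathlib

/-!
Since `I(C; Y) = H(C) − H(C|Y)`, unfolding the two total correlations reduces the bound to
`∑ⱼ (H(Cⱼ|Y) + E[log qⱼ(Cⱼ|Y)]) ≤ 0`. Each summand is nonpositive by Gibbs' inequality:
`log x ≤ x − 1` at `x = qⱼ(c|y) p(y) / p(c, y)`, summed against `p(c, y)`.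
-/

open Real Finset

noncomputable def ent {α : Type*} [Fintype α] (p : α → ℝ) : ℝ :=
  -∑ a, p a * Real.log (p a)

noncomputable def margFst {α β : Type*} [Fintype β] (p : α × β → ℝ) (a : α) : ℝ :=
  ∑ b, p (a, b)

noncomputable def margSnd {α β : Type*} [Fintype α] (p : α × β → ℝ) (b : β) : ℝ :=
  ∑ a, p (a, b)

/-- Conditional entropy H(first | second) of a joint pmf. -/
noncomputable def condEnt {α β : Type*} [Fintype α] [Fintype β] (p : α × β → ℝ) : ℝ :=
  -∑ a, ∑ b, p (a, b) * Real.log (p (a, b) / margSnd p b)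

/-- Mutual information of a joint pmf. -/
noncomputable def mi {α β : Type*} [Fintype α] [Fintype β] (p : α × β → ℝ) : ℝ :=
  ∑ a, ∑ b, p (a, b) * Real.log (p (a, b) / (margFst p a * margSnd p b))

/-- Pushforward distribution of a random variable `X` under a pmf `μ` on `Ω`. -/
noncomputable def dist {Ω α : Type*} [Fintype Ω] [DecidableEq α]
    (μ : Ω → ℝ) (X : Ω → α) (a : α) : ℝ :=
  ∑ ω, if X ω = a then μ ω else 0

/-- Joint distribution of random variables `X`, `Y` under a pmf `μ` on `Ω`. -/
noncomputable def joint {Ω α β : Type*} [Fintype Ω] [DecidableEq α] [DecidableEq β]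
    (μ : Ω → ℝ) (X : Ω → α) (Y : Ω → β) : α × β → ℝ :=
  fun ab => ∑ ω, if X ω = ab.1 ∧ Y ω = ab.2 then μ ω else 0

/-- Shannon entropy of a random variable. -/
noncomputable def entRV {Ω α : Type*} [Fintype Ω] [Fintype α] [DecidableEq α]
    (μ : Ω → ℝ) (X : Ω → α) : ℝ := ent (dist μ X)

/-- Conditional Shannon entropy H(X|Y). -/
noncomputable def condEntRV {Ω α β : Type*} [Fintype Ω] [Fintype α] [Fintype β]
    [DecidableEq α] [DecidableEq β] (μ : Ω → ℝ) (X : Ω → α) (Y : Ω → β) : ℝ :=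
  condEnt (joint μ X Y)

/-- Mutual information I(X;Y) between two random variables. -/
noncomputable def miRV {Ω α β : Type*} [Fintype Ω] [Fintype α] [Fintype β]
    [DecidableEq α] [DecidableEq β] (μ : Ω → ℝ) (X : Ω → α) (Y : Ω → β) : ℝ :=
  mi (joint μ X Y)

/-- Total correlation TC(C) = ∑ⱼ H(Cⱼ) − H(C). -/
noncomputable def tc {Ω : Type*} [Fintype Ω] {H : ℕ} {γ : Fin H → Type*}
    [∀ j, Fintype (γ j)] [∀ j, DecidableEq (γ j)]
    (μ : Ω → ℝ) (C : Ω → ∀ j, γ j) : ℝ :=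
  (∑ j, entRV μ (fun ω => C ω j)) - entRV μ C

/-- Conditional total correlation TC(C|Y) = ∑ⱼ H(Cⱼ|Y) − H(C|Y). -/
noncomputable def condTC {Ω β : Type*} [Fintype Ω] [Fintype β] [DecidableEq β]
    {H : ℕ} {γ : Fin H → Type*} [∀ j, Fintype (γ j)] [∀ j, DecidableEq (γ j)]
    (μ : Ω → ℝ) (C : Ω → ∀ j, γ j) (Y : Ω → β) : ℝ :=
  (∑ j, condEntRV μ (fun ω => C ω j) Y) - condEntRV μ C Y

/-- TC(C : Y) = TC(C) − TC(C|Y). -/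
noncomputable def tcGiven {Ω β : Type*} [Fintype Ω] [Fintype β] [DecidableEq β]
    {H : ℕ} {γ : Fin H → Type*} [∀ j, Fintype (γ j)] [∀ j, DecidableEq (γ j)]
    (μ : Ω → ℝ) (C : Ω → ∀ j, γ j) (Y : Ω → β) : ℝ :=
  tc μ C - condTC μ C Y

/-- The coordinates of `C` are mutually independent under `μ`. -/
def IndepCoords {Ω : Type*} [Fintype Ω] {H : ℕ} {γ : Fin H → Type*}
    [∀ j, Fintype (γ j)] [∀ j, DecidableEq (γ j)]
    (μ : Ω → ℝ) (C : Ω → ∀ j, γ j) : Prop :=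
  ∀ c : ∀ j, γ j, dist μ C c = ∏ j, dist μ (fun ω => C ω j) (c j)

theorem mul_log_le_mul_log_div_add_sub {a b m : ℝ} (ha : 0 ≤ a) (ham : a ≤ m) (hb : 0 ≤ b)
    (hab : 0 < a → 0 < b) : a * log b ≤ a * log (a / m) + (b * m - a) := by
  rcases ha.eq_or_lt with rfl | ha
  · simpa using mul_nonneg hb ham
  have hm : 0 < m := ha.trans_le ham
  have hb := hab ha
  have hlog : log (b * m / a) ≤ b * m / a - 1 := log_le_sub_one_of_pos (by positivity)
  have hsplit : log (b * m / a) = log b - log (a / m) := by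
    rw [log_div (by positivity) ha.ne', log_mul hb.ne' hm.ne', log_div ha.ne' hm.ne']
    ring
  have hscale : a * (b * m / a - 1) = b * m - a := by field_simp
  have := mul_le_mul_of_nonneg_left hlog ha.le
  rw [hsplit, hscale] at this
  linarith

section JointPMF

variable {α β : Type*} {p : α × β → ℝ}

theorem le_margFst [Fintype β] (hp : ∀ ab, 0 ≤ p ab) (a : α) (b : β) : p (a, b) ≤ margFst p a :=
  single_le_sum (fun b _ => hp (a, b)) (mem_univ b)

theorem le_margSnd [Fintype α] (hp : ∀ ab, 0 ≤ p ab) (a : α) (b : β) : p (a, b) ≤ margSnd p b :=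
  single_le_sum (fun a _ => hp (a, b)) (mem_univ a)

variable [Fintype α] [Fintype β]

theorem mi_eq_ent_margFst_sub_condEnt (hp : ∀ ab, 0 ≤ p ab) :
    mi p = ent (margFst p) - condEnt p := by
  have hterm : ∀ a b, p (a, b) * log (p (a, b) / (margFst p a * margSnd p b))
      = p (a, b) * log (p (a, b) / margSnd p b) - p (a, b) * log (margFst p a) := by
    intro a b
    rcases (hp (a, b)).eq_or_lt with h | h
    · simp [← h]
    have hA := h.trans_le (le_margFst hp a b)
    rw [div_mul_eq_div_div_swap, log_div (div_pos h (h.trans_le (le_margSnd hp a b))).ne' hA.ne']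
    ring
  have hmarg : ∀ a, ∑ b, p (a, b) * log (margFst p a) = margFst p a * log (margFst p a) :=
    fun a => (sum_mul ..).symm
  simp only [mi, condEnt, ent, hterm, sum_sub_distrib, hmarg]
  ring

-- The slack terms `q(x|y) p(y) − p(x, y)` sum to zero for every nonnegative `p`, normalised or not.
theorem sum_mul_log_le_neg_condEnt (hp : ∀ ab, 0 ≤ p ab) {q : α → β → ℝ}
    (hq0 : ∀ c y, 0 ≤ q c y) (hq1 : ∀ y, ∑ c, q c y = 1)
    (hqpos : ∀ c y, 0 < p (c, y) → 0 < q c y) :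
    ∑ c, ∑ y, p (c, y) * log (q c y) ≤ -condEnt p := by
  have hslack : ∑ c, ∑ y, (q c y * margSnd p y - p (c, y)) = 0 := by
    rw [sum_comm]
    refine sum_eq_zero fun y _ => ?_
    rw [sum_sub_distrib, ← sum_mul, hq1, one_mul, margSnd, sub_self]
  calc ∑ c, ∑ y, p (c, y) * log (q c y)
      ≤ ∑ c, ∑ y, (p (c, y) * log (p (c, y) / margSnd p y) + (q c y * margSnd p y - p (c, y))) :=
        sum_le_sum fun c _ => sum_le_sum fun y _ =>
          mul_log_le_mul_log_div_add_sub (hp _) (le_margSnd hp c y) (hq0 c y) (hqpos c y)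
    _ = -condEnt p := by
        simp only [sum_add_distrib, hslack, condEnt]
        ring

end JointPMF

section RandomVariables

variable {Ω α β : Type*} [Fintype Ω] [DecidableEq α] [DecidableEq β] {μ : Ω → ℝ}

theorem joint_nonneg (hμ : ∀ ω, 0 ≤ μ ω) (X : Ω → α) (Y : Ω → β) (ab : α × β) :
    0 ≤ joint μ X Y ab :=
  sum_nonneg fun ω _ => by split <;> simp [hμ ω]

theorem margFst_joint [Fintype β] (X : Ω → α) (Y : Ω → β) :
    margFst (joint μ X Y) = dist μ X := by
  ext a
  simp only [margFst, joint, _root_.dist]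
  rw [sum_comm]
  refine sum_congr rfl fun ω _ => ?_
  by_cases h : X ω = a <;> simp [h]

theorem miRV_eq_entRV_sub_condEntRV [Fintype α] [Fintype β] (hμ : ∀ ω, 0 ≤ μ ω)
    (X : Ω → α) (Y : Ω → β) : miRV μ X Y = entRV μ X - condEntRV μ X Y := by
  rw [miRV, mi_eq_ent_margFst_sub_condEnt (joint_nonneg hμ X Y), margFst_joint]
  rfl

end RandomVariables

theorem mi_lower_bound_general {Ω β : Type*} [Fintype Ω] [Fintype β] [DecidableEq β]
    {H : ℕ} {γ : Fin H → Type*} [∀ j, Fintype (γ j)] [∀ j, DecidableEq (γ j)]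
    (μ : Ω → ℝ) (hμ : ∀ ω, 0 ≤ μ ω)
    (Ct : Ω → ∀ j, γ j) (Cp : Ω → β)
    (q : ∀ j, γ j → β → ℝ)
    (hq0 : ∀ j c y, 0 ≤ q j c y) (hq1 : ∀ j y, ∑ c, q j c y = 1)
    (hqpos : ∀ j c y, 0 < joint μ (fun ω => Ct ω j) Cp (c, y) → 0 < q j c y) :
    (∑ j, entRV μ (fun ω => Ct ω j)) - tcGiven μ Ct Cp
      + ∑ j, ∑ c, ∑ y, joint μ (fun ω => Ct ω j) Cp (c, y) * Real.log (q j c y)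
      ≤ miRV μ Ct Cp := by
  have hvariational : ∑ j, ∑ c, ∑ y, joint μ (fun ω => Ct ω j) Cp (c, y) * log (q j c y)
      ≤ -∑ j, condEntRV μ (fun ω => Ct ω j) Cp :=
    (sum_le_sum fun j _ => sum_mul_log_le_neg_condEnt (joint_nonneg hμ _ _)
      (hq0 j) (hq1 j) (hqpos j)).trans_eq (sum_neg_distrib _)
  rw [miRV_eq_entRV_sub_condEntRV hμ, tcGiven, tc, condTC]
  linarith

/-- Main MI lower bound:
I(Cᵗ; Cᵖ) ≥ ∑ⱼ H(Cᵗⱼ) − TC(Cᵗ : Cᵖ) + ∑ⱼ E[log qⱼ(Cᵗⱼ | Cᵖ)],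
for arbitrary proposal conditional pmfs `qⱼ(·|y)` (positive on the support,
so the expectations are real-valued). -/
theorem mi_lower_bound {Ω β : Type*} [Fintype Ω] [Fintype β] [DecidableEq β]
    {H : ℕ} {γ : Fin H → Type*} [∀ j, Fintype (γ j)] [∀ j, DecidableEq (γ j)]
    (μ : Ω → ℝ) (hμ : ∀ ω, 0 ≤ μ ω) (hsum : ∑ ω, μ ω = 1)
    (Ct : Ω → ∀ j, γ j) (Cp : Ω → β)
    (q : ∀ j, γ j → β → ℝ)
    (hq0 : ∀ j c y, 0 ≤ q j c y) (hq1 : ∀ j y, ∑ c, q j c y = 1)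
    (hqpos : ∀ j c y, 0 < joint μ (fun ω => Ct ω j) Cp (c, y) → 0 < q j c y) :
    (∑ j, entRV μ (fun ω => Ct ω j)) - tcGiven μ Ct Cp
      + ∑ j, ∑ c, ∑ y, joint μ (fun ω => Ct ω j) Cp (c, y) * Real.log (q j c y)
      ≤ miRV μ Ct Cp :=
  mi_lower_bound_general μ hμ Ct Cp q hq0 hq1 hqpos
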